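/- Let A be n×m with unit-norm columns satisfying URP, x ∈ ℝⁿ, and let s⁰ be a solution of As = x with at most n/2 nonzero entries. For any solution ŝ of As = x, let α be the (⌊n/2⌋+1)-th largest absolute value among the entries of ŝ. Then ‖ŝ − s⁰‖ ≤ (M+1)·m·α, where M is the maximal left-inverse norm over submatrices of A with at most n columns. -/

import Mathlib

open Matrix Finset Filter

noncomputable def vnorm {k : ℕ} (s : Fin k → ℝ) : ℝ := Real.sqrt (∑ i, (s i)^2)

noncomputable def mnorm {p q : ℕ} (L : Matrix (Fin p) (Fin q) ℝ) : ℝ :=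
  Real.sqrt (∑ i, ∑ j, (L i j)^2)

def URP {n m : ℕ} (A : Matrix (Fin n) (Fin m) ℝ) : Prop :=
  ∀ g : Fin n → Fin m, Function.Injective g → (A.submatrix id g).det ≠ 0

def UnitCols {n m : ℕ} (A : Matrix (Fin n) (Fin m) ℝ) : Prop :=
  ∀ j, vnorm (fun i => A i j) = 1

def LeftInvBound {n m : ℕ} (A : Matrix (Fin n) (Fin m) ℝ) (M : ℝ) : Prop :=
  ∀ (k : ℕ), k ≤ n → ∀ g : Fin k → Fin m, Function.Injective g →
    ∃ L : Matrix (Fin k) (Fin n) ℝ, L * A.submatrix id g = 1 ∧ mnorm L ≤ M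

/-!
Put `d = ŝ - s⁰`, so `A d = 0`. Let `S` be the set of indices where `|ŝ j| > α` or `s⁰ j ≠ 0`;
it has at most `⌊n/2⌋ + n/2 ≤ n` elements, and `|d j| ≤ α` off `S`. Split `d = u + w` with `u`
supported on `S` and `w` off `S`. Then `‖w‖ ≤ ‖w‖₁ ≤ m α`, and `‖A w‖ ≤ ‖w‖₁` because the columns
have unit norm. Since `A u = -A w` and `u` lives on at most `n` columns, a left inverse of those
columns recovers `u` from `A u`, so `‖u‖ ≤ M ‖A w‖ ≤ M m α`.
-/

namespace List

lemma countP_lt_getD_mergeSort_le {α : Type*} [LinearOrder α] (l : List α) (k : ℕ) (d : α) :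
    l.countP (fun a => (l.mergeSort (fun a b => b ≤ a)).getD k d < a) ≤ k := by
  have hsorted : (l.mergeSort (fun a b => b ≤ a)).Pairwise (· ≥ ·) := pairwise_mergeSort' _ l
  rw [← (mergeSort_perm l (fun a b => b ≤ a)).countP_eq]
  generalize l.mergeSort (fun a b => b ≤ a) = s at hsorted ⊢
  have hdrop : ∀ a ∈ s.drop k, a ≤ s.getD k d := by
    intro a ha
    have hk : k < s.length := by
      by_contra! h
      simp [drop_eq_nil_of_le h] at ha
    replace hsorted := hsorted.drop (i := k)
    rw [drop_eq_getElem_cons hk] at ha hsorted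
    rw [getD_eq_getElem _ _ hk]
    rcases mem_cons.mp ha with rfl | ha
    · exact le_rfl
    · exact rel_of_pairwise_cons hsorted ha
  generalize s.getD k d = β at hdrop ⊢
  calc s.countP (β < ·)
      = (s.take k).countP (β < ·) + (s.drop k).countP (β < ·) := by
        rw [← countP_append, take_append_drop]
    _ = (s.take k).countP (β < ·) := by
        rw [countP_eq_zero (l := s.drop k).mpr fun a ha => by simpa using hdrop a ha, add_zero]
    _ ≤ k := countP_le_length.trans (length_take_le _ _)

lemma getD_nonneg {α : Type*} [Zero α] [Preorder α] {l : List α} (hl : ∀ a ∈ l, 0 ≤ a) (k : ℕ) : 0 ≤ l.getD k 0 := by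
  rcases lt_or_ge k l.length with hk | hk
  · rw [getD_eq_getElem _ _ hk]
    exact hl _ (getElem_mem hk)
  · rw [getD_eq_default _ _ hk]

end List

lemma card_filter_lt_getD_mergeSort_le {α : Type*} [LinearOrder α] {m : ℕ} (f : Fin m → α)
    (k : ℕ) (d : α) : #{i | ((List.ofFn f).mergeSort (fun a b => b ≤ a)).getD k d < f i} ≤ k := by
  have := (List.ofFn f).countP_lt_getD_mergeSort_le k d
  rwa [← Multiset.coe_countP, ← Fin.univ_val_map, Multiset.countP_map] at this

section vnorm

variable {k : ℕ}

lemma vnorm_eq_norm (s : Fin k → ℝ) : vnorm s = ‖WithLp.toLp 2 s‖ := by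
  simp [vnorm, EuclideanSpace.norm_eq]

lemma vnorm_nonneg (s : Fin k → ℝ) : 0 ≤ vnorm s := Real.sqrt_nonneg _

lemma vnorm_add_le (a b : Fin k → ℝ) : vnorm (a + b) ≤ vnorm a + vnorm b := by
  simpa only [vnorm_eq_norm, WithLp.toLp_add] using norm_add_le _ _

lemma vnorm_neg (s : Fin k → ℝ) : vnorm (-s) = vnorm s := by
  simp [vnorm]

lemma vnorm_le_sum_abs (s : Fin k → ℝ) : vnorm s ≤ ∑ i, |s i| := by
  rw [vnorm, Real.sqrt_le_left (sum_nonneg fun i _ => abs_nonneg _)]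
  simpa only [sq_abs] using sum_sq_le_sq_sum_of_nonneg (s := univ) fun i _ => abs_nonneg (s i)

lemma vnorm_comp_of_injective {m : ℕ} {g : Fin k → Fin m} (hg : Function.Injective g)
    {u : Fin m → ℝ} (hu : ∀ j ∉ Set.range g, u j = 0) : vnorm (u ∘ g) = vnorm u := by
  rw [vnorm, vnorm]
  congr 1
  exact Fintype.sum_of_injective g hg _ _ (fun j hj => by simp [hu j hj]) fun _ => rfl

end vnorm

section matrix

variable {n m : ℕ}

lemma vnorm_mulVec_le_sum (A : Matrix (Fin n) (Fin m) ℝ) (w : Fin m → ℝ) :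
    vnorm (A *ᵥ w) ≤ ∑ j, |w j| * vnorm (fun i => A i j) := by
  have hcols : A *ᵥ w = ∑ j, w j • fun i => A i j := by
    ext i
    simp [mulVec, dotProduct, mul_comm]
  rw [hcols, vnorm_eq_norm, WithLp.toLp_sum]
  refine (norm_sum_le _ _).trans_eq (sum_congr rfl fun j _ => ?_)
  rw [WithLp.toLp_smul, norm_smul, Real.norm_eq_abs, vnorm_eq_norm]

lemma UnitCols.vnorm_mulVec_le {A : Matrix (Fin n) (Fin m) ℝ} (hA : UnitCols A) (w : Fin m → ℝ) :
    vnorm (A *ᵥ w) ≤ ∑ j, |w j| := by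
  simpa [hA _] using vnorm_mulVec_le_sum A w

lemma vnorm_mulVec_le_mnorm_mul (L : Matrix (Fin n) (Fin m) ℝ) (y : Fin m → ℝ) :
    vnorm (L *ᵥ y) ≤ mnorm L * vnorm y := by
  rw [vnorm, vnorm, mnorm, ← Real.sqrt_mul (by positivity)]
  refine Real.sqrt_le_sqrt ?_
  rw [sum_mul]
  exact sum_le_sum fun i _ => sum_mul_sq_le_sq_mul_sq univ (L i) y

lemma submatrix_mulVec_comp_of_injective {k : ℕ} (A : Matrix (Fin n) (Fin m) ℝ)
    {g : Fin k → Fin m} (hg : Function.Injective g) {u : Fin m → ℝ}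
    (hu : ∀ j ∉ Set.range g, u j = 0) : A.submatrix id g *ᵥ (u ∘ g) = A *ᵥ u := by
  ext i
  exact Fintype.sum_of_injective g hg _ _ (fun j hj => by simp [hu j hj]) fun _ => rfl

lemma LeftInvBound.nonneg {A : Matrix (Fin n) (Fin m) ℝ} {M : ℝ} (hM : LeftInvBound A M) :
    0 ≤ M := by
  obtain ⟨L, -, hL⟩ := hM 0 n.zero_le Fin.elim0 fun i => i.elim0
  exact (Real.sqrt_nonneg _).trans hL

lemma LeftInvBound.vnorm_le {A : Matrix (Fin n) (Fin m) ℝ} {M : ℝ} (hM : LeftInvBound A M)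
    {S : Finset (Fin m)} (hS : #S ≤ n) {u : Fin m → ℝ} (hu : ∀ j ∉ S, u j = 0) :
    vnorm u ≤ M * vnorm (A *ᵥ u) := by
  set g := S.orderEmbOfFin rfl
  have hu' : ∀ j ∉ Set.range g, u j = 0 := by
    simpa [g, range_orderEmbOfFin] using hu
  obtain ⟨L, hLA, hL⟩ := hM #S hS g g.injective
  have hinv : L *ᵥ (A *ᵥ u) = u ∘ g := by
    rw [← submatrix_mulVec_comp_of_injective A g.injective hu', mulVec_mulVec, hLA, one_mulVec]
  calc vnorm u = vnorm (L *ᵥ (A *ᵥ u)) := by rw [hinv, vnorm_comp_of_injective g.injective hu']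
    _ ≤ mnorm L * vnorm (A *ᵥ u) := vnorm_mulVec_le_mnorm_mul L _
    _ ≤ M * vnorm (A *ᵥ u) := mul_le_mul_of_nonneg_right hL (vnorm_nonneg _)

end matrix

lemma vnorm_le_of_mulVec_eq_zero {n m : ℕ} {A : Matrix (Fin n) (Fin m) ℝ} (hA : UnitCols A)
    {M : ℝ} (hM : LeftInvBound A M) {S : Finset (Fin m)} (hS : #S ≤ n) {d : Fin m → ℝ}
    (hd : A *ᵥ d = 0) {β : ℝ} (hβ : 0 ≤ β) (hdβ : ∀ j ∉ S, |d j| ≤ β) :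
    vnorm d ≤ (M + 1) * m * β := by
  set u := (S : Set (Fin m)).indicator d
  set w := (S : Set (Fin m))ᶜ.indicator d
  have hsplit : u + w = d := Set.indicator_self_add_compl _ d
  have hw : ∑ j, |w j| ≤ m * β := calc
    ∑ j, |w j| ≤ ∑ _j : Fin m, β := sum_le_sum fun j _ => by
        by_cases hj : j ∈ S <;> simp [w, hj, hβ, hdβ j]
    _ = m * β := by simp
  have hAu : A *ᵥ u = -(A *ᵥ w) := by
    rw [eq_neg_iff_add_eq_zero, ← mulVec_add, hsplit, hd]
  have hu : vnorm u ≤ M * (m * β) := calc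
    vnorm u ≤ M * vnorm (A *ᵥ u) := hM.vnorm_le hS fun j hj => by simp [u, hj]
    _ ≤ M * (m * β) := by
      rw [hAu, vnorm_neg]
      exact mul_le_mul_of_nonneg_left ((hA.vnorm_mulVec_le w).trans hw) hM.nonneg
  calc vnorm d ≤ vnorm u + vnorm w := hsplit ▸ vnorm_add_le u w
    _ ≤ M * (m * β) + m * β := add_le_add hu ((vnorm_le_sum_abs w).trans hw)
    _ = (M + 1) * m * β := by ring

theorem stmt17_general {n m : ℕ} (A : Matrix (Fin n) (Fin m) ℝ)
    (hcols : UnitCols A) (M : ℝ) (hM : LeftInvBound A M)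
    (x : Fin n → ℝ)
    (s0 : Fin m → ℝ) (hs0 : A.mulVec s0 = x)
    (hs0k : 2 * (Finset.univ.filter fun i => s0 i ≠ 0).card ≤ n)
    (shat : Fin m → ℝ) (hshat : A.mulVec shat = x)
    (α : ℝ)
    (hα : α = ((List.ofFn fun i => |shat i|).mergeSort (fun a b => b ≤ a)).getD
      (n / 2) 0) :
    vnorm (shat - s0) ≤ (M + 1) * m * α := by
  have hlarge : #{i | α < |shat i|} ≤ n / 2 :=
    hα ▸ card_filter_lt_getD_mergeSort_le (fun i => |shat i|) (n / 2) 0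
  have hα0 : 0 ≤ α := hα ▸ List.getD_nonneg (by simp) _
  set large : Finset (Fin m) := {i | α < |shat i|}
  set support : Finset (Fin m) := {i | s0 i ≠ 0}
  refine vnorm_le_of_mulVec_eq_zero hcols hM (S := large ∪ support)
    ((card_union_le _ _).trans (by omega)) (by rw [mulVec_sub, hs0, hshat, sub_self]) hα0 ?_
  intro j hj
  simp only [large, support, mem_union, mem_filter, mem_univ, true_and, not_or, not_lt,
    not_not] at hj
  simpa [hj.2] using hj.1

theorem stmt17 {n m : ℕ} (hnm : n < m) (A : Matrix (Fin n) (Fin m) ℝ)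
    (hcols : UnitCols A) (hURP : URP A) (M : ℝ) (hM : LeftInvBound A M)
    (x : Fin n → ℝ)
    (s0 : Fin m → ℝ) (hs0 : A.mulVec s0 = x)
    (hs0k : 2 * (Finset.univ.filter fun i => s0 i ≠ 0).card ≤ n)
    (shat : Fin m → ℝ) (hshat : A.mulVec shat = x)
    (α : ℝ)
    (hα : α = ((List.ofFn fun i => |shat i|).mergeSort (fun a b => b ≤ a)).getD
      (n / 2) 0) :
    vnorm (shat - s0) ≤ (M + 1) * m * α :=
  stmt17_general A hcols M hM x s0 hs0 hs0k shat hshat α hα
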